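/- arXiv:1111.0483 — 2 statements merged into one kernel-verified Lean document; each statement's English description precedes it below -/
import Mathlib

section
/- Let X be a finite set of cardinality N, let 0 ≤ k < N, and let E be an exponential family on X of dimension k (i.e. with extended tangent space T of dimension k+1). If sup_P inf_{Q∈E} D(P‖Q) = log N − log(k+1), then k+1 divides N and there exists a partition of X into exactly k+1 blocks, each of cardinality N/(k+1), such that E equals the set of all strictly positive probability distributions on X that are constant on each block of the partition. -/
open scoped BigOperators Classical

noncomputable section

variable {X : Type*}

/-- A probability distribution on a finite set `X`. -/
def IsProb [Fintype X] (P : X → ℝ) : Prop :=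
  (∀ x, 0 ≤ P x) ∧ ∑ x, P x = 1

/-- Information divergence `D(P‖Q)` with values in `EReal`, equal to `⊤` if the
support of `P` is not contained in the support of `Q`.  (The convention
`0 · log 0 = 0` holds automatically since `Real.log 0 = 0`.) -/
def KL [Fintype X] (P Q : X → ℝ) : EReal :=
  if ∀ x, Q x = 0 → P x = 0 then ((∑ x, P x * Real.log (P x / Q x) : ℝ) : EReal) else ⊤

/-- The exponential family with strictly positive reference measure `ν` and extended
tangent space `T` (a subspace of `ℝ^X` containing the constants): the set of strictly
positive probability distributions `P` with `log (P/ν) ∈ T`. -/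
def expFam [Fintype X] (ν : X → ℝ) (T : Submodule ℝ (X → ℝ)) : Set (X → ℝ) :=
  {P | (∀ x, 0 < P x) ∧ ∑ x, P x = 1 ∧ (fun x => Real.log (P x / ν x)) ∈ T}

/-- `sup_P inf_{Q ∈ E} D(P‖Q)`, supremum over all probability distributions `P`. -/
def maxDiv [Fintype X] (E : Set (X → ℝ)) : EReal :=
  ⨆ P ∈ {P : X → ℝ | IsProb P}, ⨅ Q ∈ E, KL P Q

/-- The orthogonal complement of `T` in `ℝ^X` w.r.t. the standard inner product
(the normal space of the exponential family with extended tangent space `T`). -/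
def orthSpace [Fintype X] (T : Submodule ℝ (X → ℝ)) : Set (X → ℝ) :=
  {u | ∀ t ∈ T, ∑ x, u x * t x = 0}

/-- A circuit vector of a set `N ⊆ ℝ^X`: a nonzero element whose support is minimal,
i.e. every `u ∈ N` with `supp u ⊆ supp v` is a scalar multiple of `v`. -/
def IsCircuitVector (N : Set (X → ℝ)) (v : X → ℝ) : Prop :=
  v ∈ N ∧ v ≠ 0 ∧ ∀ u ∈ N, Function.support u ⊆ Function.support v → ∃ α : ℝ, u = α • v

/-- A circuit of `N`: the support of a circuit vector. -/
def IsCircuit (N : Set (X → ℝ)) (σ : Set X) : Prop :=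
  ∃ v, IsCircuitVector N v ∧ σ = Function.support v

/-- The closed partition model of the partition given by the equivalence relation `r`:
all probability distributions constant on each block. -/
def partModel [Fintype X] (r : X → X → Prop) : Set (X → ℝ) :=
  {Q | IsProb Q ∧ ∀ x y, r x y → Q x = Q y}

/-- The partition exponential family of the partition given by the equivalence
relation `r`: all strictly positive probability distributions constant on each block. -/
def partExpFam [Fintype X] (r : X → X → Prop) : Set (X → ℝ) :=
  {P | (∀ x, 0 < P x) ∧ ∑ x, P x = 1 ∧ ∀ x y, r x y → P x = P y}

/-- The set `X̲` of points not annihilated by all of `N`. -/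
def underlineSet (N : Set (X → ℝ)) : Set X := {x | ∃ v ∈ N, v x ≠ 0}

/-- The relation `x ∼ y` : every `v ∈ N` with `v x ≠ 0` has `v y ≠ 0`. -/
def coRel (N : Set (X → ℝ)) (x y : X) : Prop := ∀ v ∈ N, v x ≠ 0 → v y ≠ 0

/-- `Z` is an equivalence class of `∼` on `X̲`. -/
def IsClassOf (N : Set (X → ℝ)) (Z : Set X) : Prop :=
  ∃ x ∈ underlineSet N, Z = {y | coRel N x y}

end

/-!
Let `U` be the uniform distribution and `F` the polytope of distributions with the same
`T`-moments as `U`. Since `log (Q/ν) ∈ T` for `Q ∈ E`, comparing `D(P‖Q)` with `D(U‖Q)` turns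
the hypothesis into `log (k+1) ≤ H(P) + ⟨log ν, P - U⟩` on `F`. A vertex of `F` has at most
`k+1` support points, so the linear functional `⟨log ν, · - U⟩` is nonnegative at the vertices,
hence on `F`, and it vanishes on `F` because `U` is an interior point. So `ν` is constant on the
classes of points that `T` does not separate, and `H ≥ log (k+1)` on `F`: a point of `F`
supported on `k+1` points is uniform on them. If a vertex is uniform on `A` and `j ∉ A`, moving
it along a `T`-orthogonal vector supported on `A ∪ {j}` until some `i ∈ A` leaves the support
gives a point uniform on `A - i + j`; the difference of the two is a multiple of `e_j - e_i`, so
`T` does not separate `i` and `j`. Thus `A` is a transversal of the classes, `T` consists of all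
class-constant functions, and pairing class indicators with the vertex and with `U` gives the
class sizes.
-/

open Finset Real InformationTheory

section OrthSpace

variable {X : Type*} [Fintype X] {T : Submodule ℝ (X → ℝ)}

lemma mem_orthSpace_iff {u : X → ℝ} : u ∈ orthSpace T ↔ ∀ t ∈ T, u ⬝ᵥ t = 0 := Iff.rfl

lemma add_mem_orthSpace {u v : X → ℝ} (hu : u ∈ orthSpace T) (hv : v ∈ orthSpace T) :
    u + v ∈ orthSpace T := mem_orthSpace_iff.2 fun t ht => by
  rw [add_dotProduct, mem_orthSpace_iff.1 hu t ht, mem_orthSpace_iff.1 hv t ht, add_zero]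

lemma smul_mem_orthSpace (c : ℝ) {u : X → ℝ} (hu : u ∈ orthSpace T) :
    c • u ∈ orthSpace T := mem_orthSpace_iff.2 fun t ht => by
  rw [smul_dotProduct, mem_orthSpace_iff.1 hu t ht, smul_zero]

lemma sub_mem_orthSpace {u v : X → ℝ} (hu : u ∈ orthSpace T) (hv : v ∈ orthSpace T) :
    u - v ∈ orthSpace T := by
  simpa [sub_eq_add_neg] using add_mem_orthSpace hu (smul_mem_orthSpace (-1) hv)

lemma exists_mem_orthSpace_support_subset (s : Finset X) (hs : Module.finrank ℝ T < #s) :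
    ∃ u ∈ orthSpace T, u ≠ 0 ∧ Function.support u ⊆ s := by
  let ev : X → Module.Dual ℝ T := fun x => (LinearMap.proj x).comp T.subtype
  have hdep : ¬ LinearIndepOn ℝ ev (s : Set X) := fun hli => by
    have := LinearIndependent.fintype_card_le_finrank hli
    rw [Subspace.dual_finrank_eq] at this
    simp only [SetLike.coe_sort_coe, Fintype.card_coe] at this
    omega
  rw [linearIndepOn_finset_iff] at hdep
  push Not at hdep
  obtain ⟨g, hg, i, hi, hgi⟩ := hdep
  refine ⟨fun x => if x ∈ s then g x else 0, fun t ht => ?_, fun h => hgi ?_, fun x hx => ?_⟩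
  · have := LinearMap.congr_fun hg ⟨t, ht⟩
    simpa [ev, ite_mul, sum_ite_mem] using this
  · simpa [hi] using congr_fun h i
  · by_contra hxs
    exact hx (if_neg (by simpa using hxs))

end OrthSpace

section Gibbs

variable {ι : Type*} {s : Finset ι} {p q : ι → ℝ}

lemma mul_log_div_eq_mul_klFun_add_sub {a b : ℝ} (hb : b ≠ 0) :
    a * log (a / b) = b * klFun (a / b) + (a - b) := by
  rw [klFun_apply]; field_simp; ring

lemma sum_sub_le_sum_mul_log_div (hp : ∀ i ∈ s, 0 ≤ p i) (hq : ∀ i ∈ s, 0 < q i) :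
    ∑ i ∈ s, (p i - q i) ≤ ∑ i ∈ s, p i * log (p i / q i) := by
  refine sum_le_sum fun i hi => ?_
  rw [mul_log_div_eq_mul_klFun_add_sub (hq i hi).ne']
  have := klFun_nonneg (div_nonneg (hp i hi) (hq i hi).le)
  nlinarith [hq i hi]

lemma eq_of_sum_mul_log_div_le (hp : ∀ i ∈ s, 0 ≤ p i) (hq : ∀ i ∈ s, 0 < q i)
    (h : ∑ i ∈ s, p i * log (p i / q i) ≤ ∑ i ∈ s, (p i - q i)) : ∀ i ∈ s, p i = q i := by
  have hsplit : ∑ i ∈ s, p i * log (p i / q i)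
      = ∑ i ∈ s, q i * klFun (p i / q i) + ∑ i ∈ s, (p i - q i) := by
    rw [← sum_add_distrib]
    exact sum_congr rfl fun i hi => mul_log_div_eq_mul_klFun_add_sub (hq i hi).ne'
  have hnonneg : ∀ i ∈ s, 0 ≤ q i * klFun (p i / q i) := fun i hi =>
    mul_nonneg (hq i hi).le (klFun_nonneg (div_nonneg (hp i hi) (hq i hi).le))
  have hzero := (sum_eq_zero_iff_of_nonneg hnonneg).1
    (le_antisymm (by linarith) (sum_nonneg hnonneg))
  intro i hi
  have hkl : klFun (p i / q i) = 0 := (mul_eq_zero.1 (hzero i hi)).resolve_left (hq i hi).ne'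
  rw [klFun_eq_zero_iff (div_nonneg (hp i hi) (hq i hi).le), div_eq_one_iff_eq (hq i hi).ne'] at hkl
  exact hkl

end Gibbs

section Entropy

variable {X : Type*} [Fintype X]

noncomputable def entropy (P : X → ℝ) : ℝ := ∑ x, negMulLog (P x)

lemma sum_mul_log_div_eq {P Q : X → ℝ} (hQ : ∀ x, Q x ≠ 0) :
    ∑ x, P x * log (P x / Q x) = -entropy P - P ⬝ᵥ fun x => log (Q x) := by
  rw [entropy, dotProduct, ← sum_neg_distrib, ← sum_sub_distrib]
  refine sum_congr rfl fun x _ => ?_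
  rcases eq_or_ne (P x) 0 with h | h
  · simp [h]
  · rw [log_div h (hQ x), negMulLog]; ring

lemma entropy_uniform : entropy (fun _ : X => (Fintype.card X : ℝ)⁻¹) = log (Fintype.card X) := by
  rcases isEmpty_or_nonempty X with hX | hX
  · simp [entropy]
  have hN : (Fintype.card X : ℝ) ≠ 0 := by positivity
  simp [entropy, negMulLog, log_inv, hN]

variable {P : X → ℝ} {A : Finset X}

lemma sum_finset_eq_one_of_support_subset (h1 : ∑ x, P x = 1)
    (hA : Function.support P ⊆ A) : ∑ x ∈ A, P x = 1 :=
  (sum_subset (subset_univ A) fun _ _ hx =>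
    Function.notMem_support.1 fun h => hx (hA h)).trans h1

lemma sum_sub_inv_card_eq_zero (h1 : ∑ x, P x = 1) (hA : Function.support P ⊆ A) :
    ∑ x ∈ A, (P x - (#A : ℝ)⁻¹) = 0 := by
  have hA1 := sum_finset_eq_one_of_support_subset h1 hA
  have hAne : A.Nonempty := nonempty_of_sum_ne_zero (by rw [hA1]; norm_num)
  rw [sum_sub_distrib, hA1, sum_const, nsmul_eq_mul,
    mul_inv_cancel₀ (by exact_mod_cast hAne.card_pos.ne'), sub_self]

lemma sum_mul_log_div_inv_card (h1 : ∑ x, P x = 1) (hA : Function.support P ⊆ A) :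
    ∑ x ∈ A, P x * log (P x / (#A : ℝ)⁻¹) = log #A - entropy P := by
  have hA1 := sum_finset_eq_one_of_support_subset h1 hA
  have hterm : ∀ x ∈ A, P x * log (P x / (#A : ℝ)⁻¹) = P x * log #A + negMulLog (P x) * -1 := by
    intro x _
    rcases eq_or_ne (P x) 0 with h | h
    · simp [h]
    · have hcard : (#A : ℝ) ≠ 0 := by
        exact_mod_cast (card_pos.2 ⟨x, hA h⟩).ne'
      rw [div_inv_eq_mul, log_mul h hcard, negMulLog]; ring
  rw [sum_congr rfl hterm, sum_add_distrib, ← sum_mul, ← sum_mul, hA1, entropy,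
    sum_subset (subset_univ A) fun x _ hx => by
      rw [Function.notMem_support.1 fun h => hx (hA h), negMulLog_zero]]
  ring

lemma entropy_le_log_card (h0 : ∀ x, 0 ≤ P x) (h1 : ∑ x, P x = 1)
    (hA : Function.support P ⊆ A) : entropy P ≤ log #A := by
  have := sum_sub_le_sum_mul_log_div (s := A) (p := P) (q := fun _ => (#A : ℝ)⁻¹)
    (fun x _ => h0 x) fun x hx => by simpa using card_pos.2 ⟨x, hx⟩
  rw [sum_sub_inv_card_eq_zero h1 hA, sum_mul_log_div_inv_card h1 hA] at this
  linarith

lemma eq_inv_card_of_log_card_le_entropy (h0 : ∀ x, 0 ≤ P x) (h1 : ∑ x, P x = 1)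
    (hA : Function.support P ⊆ A) (h : log #A ≤ entropy P) : ∀ x ∈ A, P x = (#A : ℝ)⁻¹ := by
  refine eq_of_sum_mul_log_div_le (q := fun _ => (#A : ℝ)⁻¹) (fun x _ => h0 x)
    (fun x hx => by simpa using card_pos.2 ⟨x, hx⟩) ?_
  rw [sum_sub_inv_card_eq_zero h1 hA, sum_mul_log_div_inv_card h1 hA]
  linarith

end Entropy

section Divergence

variable {X : Type*} [Fintype X]

lemma entropy_sub_entropy_sub_le_maxDiv {ν : X → ℝ} (hν : ∀ x, 0 < ν x)
    {T : Submodule ℝ (X → ℝ)} {P P' : X → ℝ} (hP : IsProb P) (hP' : IsProb P')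
    (hPP' : P - P' ∈ orthSpace T) :
    ((entropy P' - entropy P - (P - P') ⬝ᵥ (fun x => log (ν x)) : ℝ) : EReal)
      ≤ maxDiv (expFam ν T) := by
  refine le_trans ?_ (le_iSup₂ (f := fun P (_ : IsProb P) => ⨅ Q ∈ expFam ν T, KL P Q) P hP)
  refine le_iInf₂ fun Q ⟨hQpos, hQ1, hQT⟩ => ?_
  have hQ0 : ∀ x, Q x ≠ 0 := fun x => (hQpos x).ne'
  rw [KL, if_pos fun x h => absurd h (hQ0 x), EReal.coe_le_coe_iff]
  have hgibbs := sum_sub_le_sum_mul_log_div (s := univ) (p := P') (q := Q)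
    (fun x _ => hP'.1 x) fun x _ => hQpos x
  rw [sum_sub_distrib, hP'.2, hQ1, sub_self, sum_mul_log_div_eq hQ0] at hgibbs
  rw [sum_mul_log_div_eq hQ0]
  have hlog : (fun x => log (Q x)) = (fun x => log (Q x / ν x)) + fun x => log (ν x) := by
    ext x; rw [Pi.add_apply, log_div (hQ0 x) (hν x).ne', sub_add_cancel]
  have horth : (P - P') ⬝ᵥ (fun x => log (Q x / ν x)) = 0 := (mem_orthSpace_iff.1 hPP') _ hQT
  rw [sub_dotProduct] at horth
  rw [hlog, dotProduct_add] at hgibbs ⊢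
  rw [sub_dotProduct]
  linarith

end Divergence

section Fiber

variable {X : Type*} [Fintype X] {T : Submodule ℝ (X → ℝ)} {P₀ P : X → ℝ}

def momentFiber (T : Submodule ℝ (X → ℝ)) (P₀ : X → ℝ) : Set (X → ℝ) :=
  {P | (∀ x, 0 ≤ P x) ∧ P - P₀ ∈ orthSpace T}

/-- `P` is a vertex of the polytope `momentFiber T P₀` through it. -/
def IsBasic (T : Submodule ℝ (X → ℝ)) (P : X → ℝ) : Prop :=
  ∀ u ∈ orthSpace T, Function.support u ⊆ Function.support P → u = 0

lemma sum_eq_of_mem_momentFiber (h1 : (fun _ => (1 : ℝ)) ∈ T) (hP : P ∈ momentFiber T P₀) :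
    ∑ x, P x = ∑ x, P₀ x := by
  have := mem_orthSpace_iff.1 hP.2 _ h1
  simp only [dotProduct, mul_one, Pi.sub_apply, sum_sub_distrib] at this
  linarith

lemma exists_neg_of_mem_orthSpace (h1 : (fun _ => (1 : ℝ)) ∈ T) {u : X → ℝ}
    (hu : u ∈ orthSpace T) (hu0 : u ≠ 0) : ∃ x, u x < 0 := by
  by_contra! h
  have hsum : ∑ x, u x = 0 := by simpa [dotProduct] using mem_orthSpace_iff.1 hu _ h1
  exact hu0 (funext fun x => (sum_eq_zero_iff_of_nonneg fun x _ => h x).1 hsum x (mem_univ x))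

lemma exists_pos_add_mul_eq_zero {u : X → ℝ} (hP : ∀ x, 0 ≤ P x) (hneg : ∃ x, u x < 0)
    (hpos : ∀ x, u x < 0 → 0 < P x) :
    ∃ a > 0, (∀ x, 0 ≤ P x + a * u x) ∧ ∃ x, u x < 0 ∧ P x + a * u x = 0 := by
  obtain ⟨i, hi, hmin⟩ := exists_min_image (univ.filter fun x => u x < 0) (fun x => P x / -u x)
    (by obtain ⟨x, hx⟩ := hneg; exact ⟨x, by simpa using hx⟩)
  rw [mem_filter] at hi
  refine ⟨P i / -u i, div_pos (hpos i hi.2) (neg_pos.2 hi.2), fun x => ?_, i, hi.2, ?_⟩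
  · rcases lt_or_ge (u x) 0 with hx | hx
    · have := (le_div_iff₀ (neg_pos.2 hx)).1 (hmin x (by simpa using hx))
      linarith
    · have := div_nonneg (hP i) (neg_nonneg.2 hi.2.le)
      nlinarith [hP x]
  · field_simp [hi.2.ne]
    ring

lemma exists_support_ssubset_of_not_isBasic (h1 : (fun _ => (1 : ℝ)) ∈ T)
    (hP : P ∈ momentFiber T P₀) (hb : ¬ IsBasic T P) (c : X → ℝ) :
    ∃ P' ∈ momentFiber T P₀, Function.support P' ⊂ Function.support P ∧ c ⬝ᵥ P ≤ c ⬝ᵥ P' := by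
  simp only [IsBasic, not_forall] at hb
  obtain ⟨u, hu, husupp, hu0⟩ := hb
  wlog hcu : 0 ≤ c ⬝ᵥ u generalizing u
  · refine this (-u) (by simpa using smul_mem_orthSpace (-1) hu) (by simpa using husupp)
      (neg_ne_zero.2 hu0) ?_
    rw [dotProduct_neg]
    linarith
  obtain ⟨a, ha, hnn, x₀, hx₀, hzero⟩ := exists_pos_add_mul_eq_zero hP.1
    (exists_neg_of_mem_orthSpace h1 hu hu0)
    fun x hx => (hP.1 x).lt_of_ne (Ne.symm (husupp hx.ne))
  refine ⟨P + a • u, ⟨hnn, ?_⟩, (Set.ssubset_iff_of_subset fun x hx => ?_).2 ⟨x₀, ?_, ?_⟩, ?_⟩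
  · simpa [add_sub_right_comm] using add_mem_orthSpace hP.2 (smul_mem_orthSpace a hu)
  · by_contra hPx
    have hux : u x = 0 := by_contra fun h => hPx (husupp h)
    simp_all
  · exact husupp hx₀.ne
  · simpa using hzero
  · rw [dotProduct_add, dotProduct_smul, smul_eq_mul]
    nlinarith

lemma exists_isBasic_le (h1 : (fun _ => (1 : ℝ)) ∈ T) (c : X → ℝ)
    (hP : P ∈ momentFiber T P₀) :
    ∃ V ∈ momentFiber T P₀, IsBasic T V ∧ Function.support V ⊆ Function.support P ∧
      c ⬝ᵥ P ≤ c ⬝ᵥ V := by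
  induction hn : (Function.support P).ncard using Nat.strong_induction_on generalizing P with
  | _ n ih =>
  by_cases hb : IsBasic T P
  · exact ⟨P, hP, hb, subset_rfl, le_rfl⟩
  obtain ⟨P', hP', hss, hc⟩ := exists_support_ssubset_of_not_isBasic h1 hP hb c
  obtain ⟨V, hV, hVb, hVP', hcV⟩ :=
    ih _ (hn ▸ Set.ncard_lt_ncard hss (Set.toFinite _)) hP' rfl
  exact ⟨V, hV, hVb, hVP'.trans hss.subset, hc.trans hcV⟩

lemma IsBasic.exists_support_subset_card_eq (hb : IsBasic T P) :
    ∃ A : Finset X, Function.support P ⊆ A ∧ #A = Module.finrank ℝ T := by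
  have hcard : #(Function.support P).toFinset ≤ Module.finrank ℝ T := by
    by_contra! h
    obtain ⟨u, hu, hu0, husupp⟩ := exists_mem_orthSpace_support_subset _ h
    exact hu0 (hb u hu (by simpa using husupp))
  have hrank : Module.finrank ℝ T ≤ #(univ : Finset X) := by
    simpa using Submodule.finrank_le T
  obtain ⟨A, hsA, -, hA⟩ := exists_subsuperset_card_eq (subset_univ _) hcard hrank
  exact ⟨A, by simpa using coe_subset.2 hsA, hA⟩

lemma exists_pos_sub_smul_mem_momentFiber (hP₀ : ∀ x, 0 < P₀ x) (hP : P ∈ momentFiber T P₀) :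
    ∃ ε : ℝ, 0 < ε ∧ P₀ - ε • (P - P₀) ∈ momentFiber T P₀ := by
  have hev : ∀ᶠ ε in nhdsWithin (0 : ℝ) (Set.Ioi 0), ∀ x, 0 ≤ P₀ x - ε * (P x - P₀ x) := by
    refine Filter.eventually_all.2 fun x => Filter.Tendsto.eventually_const_le (hP₀ x) ?_
    refine tendsto_nhdsWithin_of_tendsto_nhds ?_
    exact (by fun_prop : Continuous fun ε : ℝ => P₀ x - ε * (P x - P₀ x)).tendsto' 0 _
      (by simp)
  obtain ⟨ε, hε, hεpos⟩ := (hev.and self_mem_nhdsWithin).exists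
  refine ⟨ε, hεpos, fun x => by simpa using hε x, ?_⟩
  simpa using smul_mem_orthSpace (-ε) hP.2

lemma dotProduct_sub_eq_zero_of_isBasic (h1 : (fun _ => (1 : ℝ)) ∈ T) (hP₀ : ∀ x, 0 < P₀ x)
    {c : X → ℝ} (hc : ∀ V ∈ momentFiber T P₀, IsBasic T V → 0 ≤ c ⬝ᵥ (V - P₀))
    (hP : P ∈ momentFiber T P₀) : c ⬝ᵥ (P - P₀) = 0 := by
  have hnonneg : ∀ P ∈ momentFiber T P₀, 0 ≤ c ⬝ᵥ (P - P₀) := fun P hP => by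
    obtain ⟨V, hV, hVb, -, hcV⟩ := exists_isBasic_le h1 (-c) hP
    have := hc V hV hVb
    simp only [neg_dotProduct, dotProduct_sub] at hcV this ⊢
    linarith
  obtain ⟨ε, hε, hεP⟩ := exists_pos_sub_smul_mem_momentFiber hP₀ hP
  have := hnonneg _ hεP
  rw [sub_sub_cancel_left, dotProduct_neg, dotProduct_smul, smul_eq_mul] at this
  exact le_antisymm (by nlinarith) (hnonneg P hP)

end Fiber

def Indist {X : Type*} (T : Submodule ℝ (X → ℝ)) (x y : X) : Prop := ∀ t ∈ T, t x = t y

section Indist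

variable {X : Type*} {T : Submodule ℝ (X → ℝ)} {A : Finset X}

lemma indist_equivalence (T : Submodule ℝ (X → ℝ)) : Equivalence (Indist T) :=
  ⟨fun _ _ _ => rfl, fun h t ht => (h t ht).symm, fun h h' t ht => (h t ht).trans (h' t ht)⟩

lemma setOf_indist_eq {x y : X} (h : Indist T x y) :
    {z | Indist T x z} = {z | Indist T y z} :=
  Set.ext fun _ => ⟨(indist_equivalence T).trans ((indist_equivalence T).symm h),
    (indist_equivalence T).trans h⟩

lemma ncard_range_setOf_indist (hcover : ∀ x, ∃ i ∈ A, Indist T x i)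
    (hsep : ∀ i ∈ A, ∀ j ∈ A, Indist T i j → i = j) :
    (Set.range fun x => {y | Indist T x y}).ncard = #A := by
  have hrange : (Set.range fun x => {y | Indist T x y}) = (fun x => {y | Indist T x y}) '' A := by
    refine Set.ext fun s => ⟨?_, fun ⟨i, _, hi⟩ => ⟨i, hi⟩⟩
    rintro ⟨x, rfl⟩
    obtain ⟨i, hi, hxi⟩ := hcover x
    exact ⟨i, hi, (setOf_indist_eq hxi).symm⟩
  rw [hrange, Set.InjOn.ncard_image, Set.ncard_coe_finset]
  intro i hi j hj hij
  exact hsep i hi j hj ((Set.ext_iff.1 hij j).2 ((indist_equivalence T).refl j))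

variable [Fintype X]

lemma single_sub_single_mem_orthSpace {x y : X} (hxy : Indist T x y) :
    Pi.single x 1 - Pi.single y 1 ∈ orthSpace T := mem_orthSpace_iff.2 fun t ht => by
  rw [sub_dotProduct, single_dotProduct, single_dotProduct, hxy t ht, sub_self]

lemma IsBasic.eq_of_indist {V : X → ℝ} (hb : IsBasic T V) {x y : X} (hx : V x ≠ 0) (hy : V y ≠ 0)
    (hxy : Indist T x y) : x = y := by
  by_contra hne
  have h0 := hb _ (single_sub_single_mem_orthSpace hxy) fun z hz => by
    rcases eq_or_ne z x with rfl | hzx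
    · exact hx
    rcases eq_or_ne z y with rfl | hzy
    · exact hy
    simp [hzx, hzy] at hz
  simpa [hne] using congr_fun h0 x

lemma mem_of_forall_indist (hA : #A = Module.finrank ℝ T) (hcover : ∀ x, ∃ i ∈ A, Indist T x i)
    {f : X → ℝ} (hf : ∀ x y, Indist T x y → f x = f y) : f ∈ T := by
  let restrict : T →ₗ[ℝ] (A → ℝ) := (LinearMap.funLeft ℝ ℝ Subtype.val).comp T.subtype
  have hinj : Function.Injective restrict := by
    refine (injective_iff_map_eq_zero restrict).2 fun t ht => Subtype.ext (funext fun x => ?_)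
    obtain ⟨i, hi, hxi⟩ := hcover x
    rw [hxi t t.2]
    exact congr_fun ht ⟨i, hi⟩
  obtain ⟨t, ht⟩ := (LinearMap.injective_iff_surjective_of_finrank_eq_finrank
    (by simp [hA])).1 hinj fun i => f i
  convert t.2
  funext x
  obtain ⟨i, hi, hxi⟩ := hcover x
  rw [hxi t t.2, hf x i hxi]
  exact (congr_fun ht ⟨i, hi⟩).symm

end Indist

section Transversal

variable {X : Type*} [Fintype X] {T : Submodule ℝ (X → ℝ)} {P₀ V : X → ℝ} {A : Finset X}

lemma dotProduct_eq_mul_sum_of_support_subset {c : ℝ} (hA : Function.support V ⊆ A)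
    (hV : ∀ x ∈ A, V x = c) (t : X → ℝ) : V ⬝ᵥ t = c * ∑ x ∈ A, t x := by
  rw [dotProduct, mul_sum, ← sum_subset (subset_univ A) fun x _ hx => by
    rw [Function.notMem_support.1 fun h => hx (hA h), zero_mul]]
  exact sum_congr rfl fun x hx => by rw [hV x hx]

lemma exists_mem_momentFiber_support_subset_insert_erase (h1 : (fun _ => (1 : ℝ)) ∈ T)
    (hV : V ∈ momentFiber T P₀) (hb : IsBasic T V) (hVA : Function.support V ⊆ A)
    (hVpos : ∀ x ∈ A, 0 < V x) (hAcard : Module.finrank ℝ T ≤ #A) {j : X} (hj : j ∉ A) :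
    ∃ i₀ ∈ A, ∃ P ∈ momentFiber T P₀, Function.support P ⊆ ↑(insert j (A.erase i₀)) := by
  obtain ⟨u, hu, hu0, husupp⟩ :=
    exists_mem_orthSpace_support_subset (T := T) (insert j A)
      (by rw [card_insert_of_notMem hj]; omega)
  have hmem : ∀ x, u x ≠ 0 → x ≠ j → x ∈ A := fun x hx hxj =>
    (mem_insert.1 (husupp hx)).resolve_left hxj
  have huj : u j ≠ 0 := fun h => hu0 (hb u hu fun x hx =>
    (hVpos x (hmem x hx fun hxj => hx (hxj ▸ h))).ne')
  set w := (u j)⁻¹ • u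
  have hw : w ∈ orthSpace T := smul_mem_orthSpace _ hu
  have hwj : w j = 1 := by simp [w, huj]
  have hwA : ∀ x, w x < 0 → x ∈ A := fun x hx =>
    hmem x (fun h => by simp [w, h] at hx) fun hxj => by rw [hxj, hwj] at hx; linarith
  obtain ⟨a, ha, hnn, i₀, hi₀, hzero⟩ := exists_pos_add_mul_eq_zero hV.1
    (exists_neg_of_mem_orthSpace h1 hw fun h => by simp [h] at hwj)
    fun x hx => hVpos x (hwA x hx)
  refine ⟨i₀, hwA i₀ hi₀, V + a • w, ⟨hnn, ?_⟩, fun x hx => ?_⟩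
  · simpa [add_sub_right_comm] using add_mem_orthSpace hV.2 (smul_mem_orthSpace a hw)
  · rw [Function.mem_support, Pi.add_apply, Pi.smul_apply, smul_eq_mul] at hx
    rw [mem_coe]
    rcases eq_or_ne x j with rfl | hxj
    · exact mem_insert_self _ _
    refine mem_insert_of_mem (mem_erase.2 ⟨fun h => hx (h ▸ hzero), ?_⟩)
    by_contra hxA
    have hVx : V x = 0 := Function.notMem_support.1 fun h => hxA (hVA h)
    have hux : u x = 0 := by_contra fun h => hxA (hmem x h hxj)
    simp [hVx, w, hux] at hx

lemma eq_inv_finrank_of_support_subset (h1 : (fun _ => (1 : ℝ)) ∈ T) (hP₀ : ∑ x, P₀ x = 1)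
    (hH : ∀ P ∈ momentFiber T P₀, log (Module.finrank ℝ T) ≤ entropy P)
    (hV : V ∈ momentFiber T P₀) (hA : Function.support V ⊆ A)
    (hAcard : #A = Module.finrank ℝ T) : ∀ x ∈ A, V x = (Module.finrank ℝ T : ℝ)⁻¹ := by
  have hV1 : ∑ x, V x = 1 := (sum_eq_of_mem_momentFiber h1 hV).trans hP₀
  rw [← hAcard] at hH ⊢
  exact eq_inv_card_of_log_card_le_entropy hV.1 hV1 hA (hH V hV)

lemma exists_mem_indist_of_isBasic (h1 : (fun _ => (1 : ℝ)) ∈ T) (hP₀ : ∑ x, P₀ x = 1)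
    (hH : ∀ P ∈ momentFiber T P₀, log (Module.finrank ℝ T) ≤ entropy P)
    (hV : V ∈ momentFiber T P₀) (hb : IsBasic T V) (hVA : Function.support V ⊆ A)
    (hAcard : #A = Module.finrank ℝ T) (j : X) : ∃ i ∈ A, Indist T j i := by
  by_cases hj : j ∈ A
  · exact ⟨j, hj, fun _ _ => rfl⟩
  have hVeq := eq_inv_finrank_of_support_subset h1 hP₀ hH hV hVA hAcard
  have hA0 : A.Nonempty := nonempty_of_sum_ne_zero (by
    rw [sum_finset_eq_one_of_support_subset ((sum_eq_of_mem_momentFiber h1 hV).trans hP₀) hVA]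
    exact one_ne_zero)
  have hr : (0 : ℝ) < Module.finrank ℝ T := by rw [← hAcard]; exact_mod_cast hA0.card_pos
  obtain ⟨i₀, hi₀, P, hP, hPA⟩ := exists_mem_momentFiber_support_subset_insert_erase h1 hV hb hVA
    (fun x hx => by rw [hVeq x hx]; positivity) hAcard.ge hj
  have hj' : j ∉ A.erase i₀ := fun h => hj (mem_of_mem_erase h)
  have hPeq := eq_inv_finrank_of_support_subset h1 hP₀ hH hP hPA
    (by rw [card_insert_of_notMem hj', card_erase_of_mem hi₀, hAcard]; have := hA0.card_pos; omega)
  refine ⟨i₀, hi₀, fun t ht => ?_⟩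
  have horth := mem_orthSpace_iff.1 (sub_mem_orthSpace hP.2 hV.2) t ht
  rw [sub_sub_sub_cancel_right, sub_dotProduct, dotProduct_eq_mul_sum_of_support_subset hPA hPeq,
    dotProduct_eq_mul_sum_of_support_subset hVA hVeq, sum_insert hj', ← add_sum_erase A t hi₀,
    ← mul_sub, add_sub_add_right_eq_sub] at horth
  exact sub_eq_zero.1 ((mul_eq_zero.1 horth).resolve_left (inv_pos.2 hr).ne')

lemma ncard_setOf_indist_mul_finrank
    (hT : ∀ f : X → ℝ, (∀ x y, Indist T x y → f x = f y) → f ∈ T) {V : X → ℝ}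
    (hV : V ∈ momentFiber T fun _ => (Fintype.card X : ℝ)⁻¹) (hVA : Function.support V ⊆ A)
    (hVeq : ∀ x ∈ A, V x = (Module.finrank ℝ T : ℝ)⁻¹)
    (hsep : ∀ i ∈ A, ∀ j ∈ A, Indist T i j → i = j) {i : X} (hi : i ∈ A) :
    {y | Indist T i y}.ncard * Module.finrank ℝ T = Fintype.card X := by
  rw [Set.ncard_eq_toFinset_card', Set.toFinset_ofPred]
  set f : X → ℝ := fun x => if Indist T i x then 1 else 0
  have hf : f ∈ T := hT f fun x y hxy => by
    have : Indist T i x ↔ Indist T i y :=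
      ⟨fun h => (indist_equivalence T).trans h hxy,
        fun h => (indist_equivalence T).trans h ((indist_equivalence T).symm hxy)⟩
    simp only [f, this]
  have hVf : V ⬝ᵥ f = (Module.finrank ℝ T : ℝ)⁻¹ := by
    rw [dotProduct_eq_mul_sum_of_support_subset hVA hVeq, sum_eq_single_of_mem i hi
      fun x hx hxi => if_neg fun h => hxi (hsep i hi x hx h).symm]
    simp [(indist_equivalence T).refl i]
  have horth := mem_orthSpace_iff.1 hV.2 f hf
  rw [sub_dotProduct, hVf] at horth
  simp only [dotProduct, f, mul_ite, mul_one, mul_zero, sum_ite, sum_const_zero, add_zero,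
    sum_const, nsmul_eq_mul] at horth
  have hN : (0 : ℝ) < Fintype.card X := by exact_mod_cast Fintype.card_pos_iff.2 ⟨i⟩
  have hc : (0 : ℝ) < #(univ.filter (Indist T i)) := by
    exact_mod_cast card_pos.2 ⟨i, by simp [(indist_equivalence T).refl i]⟩
  have hr : (Module.finrank ℝ T : ℝ) ≠ 0 := fun h => by
    rw [h, inv_zero] at horth
    nlinarith [inv_pos.2 hN]
  field_simp at horth
  have : (#(univ.filter (Indist T i)) * Module.finrank ℝ T : ℝ) = Fintype.card X := by linarith
  exact_mod_cast this

end Transversal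

section ExpFam

variable {X : Type*} [Fintype X] {ν : X → ℝ} {T : Submodule ℝ (X → ℝ)}

lemma expFam_eq_partExpFam (hν : ∀ x, 0 < ν x) (hνT : ∀ x y, Indist T x y → ν x = ν y)
    (hT : ∀ f : X → ℝ, (∀ x y, Indist T x y → f x = f y) → f ∈ T) :
    expFam ν T = partExpFam (Indist T) := by
  ext P
  refine ⟨fun ⟨hpos, hsum, hlog⟩ => ⟨hpos, hsum, fun x y hxy => ?_⟩,
    fun ⟨hpos, hsum, hconst⟩ => ⟨hpos, hsum, hT _ fun x y hxy => by
      simp only [hconst x y hxy, hνT x y hxy]⟩⟩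
  have := log_injOn_pos (div_pos (hpos x) (hν x)) (div_pos (hpos y) (hν y)) (hxy _ hlog)
  rwa [hνT x y hxy, div_left_inj' (hν y).ne'] at this

variable [Nonempty X]

lemma eq_of_indist_of_dotProduct_log_sub_eq_zero (hν : ∀ x, 0 < ν x)
    (horth : ∀ P ∈ momentFiber T (fun _ => (Fintype.card X : ℝ)⁻¹),
      (fun x => log (ν x)) ⬝ᵥ (P - fun _ => (Fintype.card X : ℝ)⁻¹) = 0)
    {x y : X} (hxy : Indist T x y) : ν x = ν y := by
  set U : X → ℝ := fun _ => (Fintype.card X : ℝ)⁻¹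
  have hN : (0 : ℝ) < (Fintype.card X : ℝ)⁻¹ := by positivity
  have hP : U + (Fintype.card X : ℝ)⁻¹ • (Pi.single x 1 - Pi.single y 1) ∈ momentFiber T U := by
    refine ⟨fun z => ?_, by simpa using smul_mem_orthSpace _ (single_sub_single_mem_orthSpace hxy)⟩
    have hx : 0 ≤ (Pi.single x 1 : X → ℝ) z := by rw [Pi.single_apply]; split_ifs <;> norm_num
    have hy : (Pi.single y 1 : X → ℝ) z ≤ 1 := by rw [Pi.single_apply]; split_ifs <;> norm_num
    simp only [Pi.add_apply, Pi.smul_apply, Pi.sub_apply, smul_eq_mul, U]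
    nlinarith
  have := horth _ hP
  rw [add_sub_cancel_left, dotProduct_smul, dotProduct_sub, dotProduct_single,
    dotProduct_single, smul_eq_mul, mul_one, mul_one] at this
  exact log_injOn_pos (hν x) (hν y) (sub_eq_zero.1 ((mul_eq_zero.1 this).resolve_left hN.ne'))

lemma log_finrank_le_entropy_and_indist_of_maxDiv_le (hν : ∀ x, 0 < ν x)
    (h1 : (fun _ => (1 : ℝ)) ∈ T)
    (hmax : maxDiv (expFam ν T)
      ≤ ((log (Fintype.card X) - log (Module.finrank ℝ T) : ℝ) : EReal)) :
    (∀ P ∈ momentFiber T (fun _ => (Fintype.card X : ℝ)⁻¹),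
      log (Module.finrank ℝ T) ≤ entropy P) ∧ ∀ x y, Indist T x y → ν x = ν y := by
  set U : X → ℝ := fun _ => (Fintype.card X : ℝ)⁻¹
  set c : X → ℝ := fun x => log (ν x)
  have hU : IsProb U := ⟨fun _ => by positivity, by simp [U]⟩
  have hent : ∀ P ∈ momentFiber T U,
      log (Module.finrank ℝ T) ≤ entropy P + c ⬝ᵥ (P - U) := fun P hP => by
    have := (entropy_sub_entropy_sub_le_maxDiv hν
      ⟨hP.1, (sum_eq_of_mem_momentFiber h1 hP).trans hU.2⟩ hU hP.2).trans hmax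
    rw [EReal.coe_le_coe_iff, entropy_uniform, dotProduct_comm] at this
    linarith
  have horth : ∀ P ∈ momentFiber T U, c ⬝ᵥ (P - U) = 0 := fun P hP =>
    dotProduct_sub_eq_zero_of_isBasic h1 (fun _ => by positivity) (fun V hV hb => by
      obtain ⟨A, hVA, hA⟩ := hb.exists_support_subset_card_eq
      have := entropy_le_log_card hV.1 ((sum_eq_of_mem_momentFiber h1 hV).trans hU.2) hVA
      rw [hA] at this
      linarith [hent V hV]) hP
  exact ⟨fun P hP => by linarith [hent P hP, horth P hP],
    fun _ _ => eq_of_indist_of_dotProduct_log_sub_eq_zero hν horth⟩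

end ExpFam

theorem stmt12_general (X : Type*) [Fintype X] [Nonempty X] (N k : ℕ)
    (hN : Fintype.card X = N)
    (ν : X → ℝ) (hν : ∀ x, 0 < ν x)
    (T : Submodule ℝ (X → ℝ)) (h1 : (fun _ => (1 : ℝ)) ∈ T)
    (hdim : Module.finrank ℝ T = k + 1)
    (hmax : maxDiv (expFam ν T) = ((Real.log (N : ℝ) - Real.log ((k : ℝ) + 1) : ℝ) : EReal)) :
    (k + 1) ∣ N ∧
    ∃ r : X → X → Prop, Equivalence r ∧
      (Set.range fun x : X => ({y | r x y} : Set X)).ncard = k + 1 ∧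
      (∀ x : X, ({y | r x y} : Set X).ncard = N / (k + 1)) ∧
      expFam ν T = partExpFam r := by
  subst hN
  set U : X → ℝ := fun _ => (Fintype.card X : ℝ)⁻¹
  obtain ⟨hH, hνT⟩ := log_finrank_le_entropy_and_indist_of_maxDiv_le hν h1
    (by rw [hmax, hdim]; push_cast; rfl)
  have hU1 : ∑ x, U x = 1 := by simp [U]
  obtain ⟨V, hV, hb, -, -⟩ := exists_isBasic_le h1 0
    (show U ∈ momentFiber T U from
      ⟨fun _ => by positivity, mem_orthSpace_iff.2 fun t _ => by rw [sub_self, zero_dotProduct]⟩)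
  obtain ⟨A, hVA, hA⟩ := hb.exists_support_subset_card_eq
  have hVeq := eq_inv_finrank_of_support_subset h1 hU1 hH hV hVA hA
  have hcover := exists_mem_indist_of_isBasic h1 hU1 hH hV hb hVA hA
  have hsep : ∀ i ∈ A, ∀ j ∈ A, Indist T i j → i = j := fun i hi j hj =>
    hb.eq_of_indist (by rw [hVeq i hi, hdim]; positivity) (by rw [hVeq j hj, hdim]; positivity)
  have hT : ∀ f : X → ℝ, (∀ x y, Indist T x y → f x = f y) → f ∈ T := fun _ =>
    mem_of_forall_indist hA hcover
  have hsize := fun i hi => ncard_setOf_indist_mul_finrank hT hV hVA hVeq hsep (i := i) hi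
  rw [hdim] at hA hsize
  obtain ⟨i, hi⟩ : A.Nonempty := card_pos.1 (by omega)
  refine ⟨⟨_, by rw [← hsize i hi, mul_comm]⟩, Indist T, indist_equivalence T,
    by rw [ncard_range_setOf_indist hcover hsep, hA], fun x => ?_,
    expFam_eq_partExpFam hν hνT hT⟩
  obtain ⟨j, hj, hxj⟩ := hcover x
  rw [setOf_indist_eq hxj, ← hsize j hj, Nat.mul_div_cancel _ k.succ_pos]

/-- a `k`-dimensional exponential family attaining
`sup_P inf_{Q ∈ E} D(P‖Q) = log N − log (k+1)` is the partition exponential family of a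
homogeneous partition into `k+1` blocks of cardinality `N/(k+1)`; in particular
`k+1` divides `N`. -/
theorem stmt12 (X : Type*) [Fintype X] [Nonempty X] (N k : ℕ)
    (hN : Fintype.card X = N) (hk : k < N)
    (ν : X → ℝ) (hν : ∀ x, 0 < ν x)
    (T : Submodule ℝ (X → ℝ)) (h1 : (fun _ => (1 : ℝ)) ∈ T)
    (hdim : Module.finrank ℝ T = k + 1)
    (hmax : maxDiv (expFam ν T) = ((Real.log (N : ℝ) - Real.log ((k : ℝ) + 1) : ℝ) : EReal)) :
    (k + 1) ∣ N ∧
    ∃ r : X → X → Prop, Equivalence r ∧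
      (Set.range fun x : X => ({y | r x y} : Set X)).ncard = k + 1 ∧
      (∀ x : X, ({y | r x y} : Set X).ncard = N / (k + 1)) ∧
      expFam ν T = partExpFam r :=
  stmt12_general X N k hN ν hν T h1 hdim hmax
end

section
/- Let X = X₁ × ⋯ × X_n be a product of nonempty finite sets with |X_i| = N_i, and let K ⊆ {1,…,n}. Let E_K be the set of strictly positive probability distributions P on X such that P(x) = P(y) whenever x_i = y_i for all i ∈ K. Then: (a) E_K is an exponential family on X of dimension ∏_{i∈K} N_i − 1; (b) sup_P inf_{Q∈E_K} D(P‖Q) = ∑_{i∉K} log N_i; and (c) every exponential family E' on X of dimension strictly less than ∏_{i∈K} N_i − 1 satisfies sup_P inf_{Q∈E'} D(P‖Q) > ∑_{i∉K} log N_i. -/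
open scoped BigOperators Classical

/-!
With `q x = x|_K`, the family `E_K` consists of the positive distributions constant on the fibres of
`q`, all of size `M = ∏_{i∉K} N_i`, and its extended tangent space is the space of functions of
`q x`. A point mass has divergence at least `log M` from `E_K`, since every `Q ∈ E_K` is constant
on blocks of size `M` and so gives each point mass at most `1/M`; every `P` has divergence at most
`log M + δ` from a mixture of its block average with a little of the uniform distribution `U`.

For the lower bound, let `E` have extended tangent space `T` of dimension `k` and let `W ⊇ T`
contain `log ν`, so that `log Q ∈ W` for all `Q ∈ E`. A conic Carathéodory argument yields a
distribution `P` with the same `W`-moments as `U` and at most `dim W` support points; hence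
`D(P‖Q) = ∑ P log P - ∑ U log Q ≥ -log (dim W) - ∑ U log Q`. If `log ν ∈ T`, take `W = T`, of
dimension `k`, and use Jensen: `∑ U log Q ≤ -log N` with `N = |X|`. Otherwise `dim W = k + 1`,
but `U` is not in the closure of `E`, so by compactness and strict concavity of `log` the sum
`∑ U log Q` stays uniformly below `-log N`. Either way the maximal divergence exceeds
`log (N / (k + 1))`, which is at least `log M` when `k < ∏_{i∈K} N_i`.
-/

open Finset Real Module

section FiniteSpace

variable {X : Type*} [Fintype X]

theorem KL_of_pos {P Q : X → ℝ} (hQ : ∀ x, 0 < Q x) :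
    KL P Q = ((∑ x, P x * log (P x / Q x) : ℝ) : EReal) :=
  if_pos fun x hx => absurd hx (hQ x).ne'

theorem KL_le_of_le_exp_mul {P Q : X → ℝ} {r : ℝ} (hP : IsProb P) (hQ : ∀ x, 0 < Q x)
    (hPQ : ∀ x, P x ≤ exp r * Q x) : KL P Q ≤ r := by
  rw [KL_of_pos hQ, EReal.coe_le_coe_iff]
  calc ∑ x, P x * log (P x / Q x) ≤ ∑ x, P x * r := by
        refine sum_le_sum fun x _ => ?_
        rcases (hP.1 x).eq_or_lt with h | h
        · simp [← h]
        · refine mul_le_mul_of_nonneg_left ?_ h.le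
          rw [← log_exp r]
          exact log_le_log (div_pos h (hQ x)) ((div_le_iff₀ (hQ x)).2 (hPQ x))
    _ = r := by rw [← sum_mul, hP.2, one_mul]

theorem neg_log_card_support_le_sum_mul_log {P : X → ℝ} (hP : IsProb P) :
    -log #{x | P x ≠ 0} ≤ ∑ x, P x * log (P x) := by
  set S : Finset X := {x | P x ≠ 0}
  have hpos : ∀ x ∈ S, 0 < P x := fun x hx => (hP.1 x).lt_of_ne' (mem_filter.1 hx).2
  have jensen := strictConcaveOn_log_Ioi.concaveOn.le_map_sum (t := S) (p := fun x => (P x)⁻¹)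
    (fun x hx => (hpos x hx).le) (by rw [sum_filter_ne_zero, hP.2])
    (fun x hx => inv_pos.2 (hpos x hx))
  have hS : ∑ x ∈ S, P x • (P x)⁻¹ = #S := by
    simp only [smul_eq_mul]
    rw [sum_congr rfl fun x hx => mul_inv_cancel₀ (hpos x hx).ne']; simp
  have hent : ∑ x ∈ S, P x • log (P x)⁻¹ = -∑ x, P x * log (P x) := by
    rw [← sum_filter_of_ne (s := univ) (p := fun x => P x ≠ 0) fun x _ h hx => h (by simp [hx])]
    simp [S, log_inv]
  rw [hS, hent] at jensen
  linarith

theorem sum_mul_log_le_neg_log_card {Q : X → ℝ} (hQ : ∀ x, 0 < Q x) (h1 : ∑ x, Q x = 1) :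
    ∑ x, (Fintype.card X : ℝ)⁻¹ * log (Q x) ≤ -log (Fintype.card X) := by
  have : Nonempty X := univ_nonempty_iff.1 (nonempty_of_sum_ne_zero (h1 ▸ one_ne_zero))
  have jensen := strictConcaveOn_log_Ioi.concaveOn.le_map_sum (t := univ)
    (w := fun _ => (Fintype.card X : ℝ)⁻¹) (p := Q) (fun _ _ => by positivity) (by simp)
    (fun x _ => hQ x)
  simpa [← mul_sum, h1, log_inv] using jensen

theorem sum_mul_log_lt_neg_log_card {Q : X → ℝ} (hQ : ∀ x, 0 < Q x) (h1 : ∑ x, Q x = 1)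
    (hne : Q ≠ fun _ => (Fintype.card X : ℝ)⁻¹) :
    ∑ x, (Fintype.card X : ℝ)⁻¹ * log (Q x) < -log (Fintype.card X) := by
  have : Nonempty X := ⟨(Function.ne_iff.1 hne).choose⟩
  have jensen := (strictConcaveOn_log_Ioi.lt_map_sum_iff_of_pos' (t := univ)
    (w := fun _ => (Fintype.card X : ℝ)⁻¹) (p := Q) (fun _ _ => by positivity) (by simp)
    (fun x _ => hQ x)).2
  simp only [smul_eq_mul, ← mul_sum, h1, mul_one, log_inv] at jensen
  rw [← mul_sum]
  exact jensen (by simpa [funext_iff] using hne)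

theorem exists_mem_orthSpace_support_subset_s18 (W : Submodule ℝ (X → ℝ)) (S : Finset X)
    (hS : finrank ℝ W < #S) : ∃ v ∈ orthSpace W, v ≠ 0 ∧ ∀ x ∉ S, v x = 0 := by
  let ev : S → Module.Dual ℝ W := fun x => (LinearMap.proj x.1).comp W.subtype
  have hdep : ¬LinearIndependent ℝ ev := fun h => by
    have := h.fintype_card_le_finrank
    rw [Subspace.dual_finrank_eq, Fintype.card_coe] at this
    omega
  obtain ⟨g, hg, i, hi⟩ := Fintype.not_linearIndependent_iff.1 hdep
  set v : X → ℝ := fun x => if h : x ∈ S then g ⟨x, h⟩ else 0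
  have hvS : ∀ x ∉ S, v x = 0 := fun x hx => dif_neg hx
  refine ⟨v, fun w hw => ?_, fun h => hi ?_, hvS⟩
  · have hgw := congrArg (fun φ : Module.Dual ℝ W => φ ⟨w, hw⟩) hg
    simp only [LinearMap.sum_apply, LinearMap.smul_apply, LinearMap.zero_apply, ev,
      LinearMap.comp_apply, LinearMap.proj_apply, Submodule.subtype_apply, smul_eq_mul] at hgw
    rw [← sum_subset (subset_univ S) fun x _ hx => by rw [hvS x hx, zero_mul], ← sum_coe_sort]
    simpa [v] using hgw
  · simpa [v] using congrFun h i

theorem exists_sub_mul_nonneg_support_ssubset {P v : X → ℝ} (hP : ∀ x, 0 ≤ P x)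
    (hv : ∃ x, 0 < v x) (hvP : ∀ x, P x = 0 → v x = 0) :
    ∃ t : ℝ, (∀ x, 0 ≤ P x - t * v x) ∧
      ({x | P x - t * v x ≠ 0} : Finset X) ⊂ ({x | P x ≠ 0} : Finset X) := by
  obtain ⟨x₀, hx₀, hmin⟩ := exists_min_image {x | 0 < v x} (fun x => P x / v x)
    (by simpa [Finset.Nonempty] using hv)
  rw [mem_filter] at hx₀
  refine ⟨P x₀ / v x₀, fun x => ?_, ?_⟩
  · rcases le_or_gt (v x) 0 with h | h
    · nlinarith [hP x, div_nonneg (hP x₀) hx₀.2.le]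
    · have := hmin x (by simpa using h)
      rw [sub_nonneg, ← le_div_iff₀ h]
      exact this
  · rw [ssubset_iff_of_subset fun x => by
      simp only [mem_filter, mem_univ, true_and]; intro h h0; simp [h0, hvP x h0] at h]
    exact ⟨x₀, by simpa using fun h => hx₀.2.ne' (hvP x₀ h),
      by field_simp [hx₀.2.ne']; simp⟩

theorem exists_nonneg_moments_eq_card_support_le (W : Submodule ℝ (X → ℝ)) {U : X → ℝ}
    (hU : ∀ x, 0 ≤ U x) :
    ∃ P : X → ℝ, (∀ x, 0 ≤ P x) ∧ (∀ w ∈ W, ∑ x, P x * w x = ∑ x, U x * w x) ∧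
      #{x | P x ≠ 0} ≤ finrank ℝ W := by
  induction h : #{x | U x ≠ 0} using Nat.strong_induction_on generalizing U with
  | _ n ih =>
  by_cases hle : n ≤ finrank ℝ W
  · exact ⟨U, hU, fun _ _ => rfl, h ▸ hle⟩
  obtain ⟨v, hvW, hv0, hvU⟩ :=
    exists_mem_orthSpace_support_subset_s18 W {x | U x ≠ 0} (by omega)
  obtain ⟨v, hvW, hvpos, hvU⟩ :
      ∃ v ∈ orthSpace W, (∃ x, 0 < v x) ∧ ∀ x, U x = 0 → v x = 0 := by
    obtain ⟨x, hx⟩ := Function.ne_iff.1 hv0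
    rcases hx.lt_or_gt with h | h
    · refine ⟨-v, fun w hw => ?_, ⟨x, by simpa using h⟩,
        fun y hy => by simp [hvU y (by simpa)]⟩
      simp [neg_mul, hvW w hw]
    · exact ⟨v, hvW, ⟨x, h⟩, fun y hy => hvU y (by simpa)⟩
  obtain ⟨t, ht0, hts⟩ := exists_sub_mul_nonneg_support_ssubset hU hvpos hvU
  obtain ⟨P, hP0, hPW, hPcard⟩ := ih _ (h ▸ card_lt_card hts) ht0 rfl
  refine ⟨P, hP0, fun w hw => (hPW w hw).trans ?_, hPcard⟩
  have := hvW w hw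
  simp only [sub_mul, sum_sub_distrib, mul_assoc, ← mul_sum, this, mul_zero, sub_zero]

theorem le_maxDiv_of_log_mem {E : Set (X → ℝ)} {W : Submodule ℝ (X → ℝ)}
    (h1W : (fun _ => (1 : ℝ)) ∈ W)
    (hE : ∀ Q ∈ E, (∀ x, 0 < Q x) ∧ (fun x => log (Q x)) ∈ W)
    {U : X → ℝ} (hU : IsProb U) {g : ℝ} (hg : ∀ Q ∈ E, ∑ x, U x * log (Q x) ≤ g) :
    ((-log (finrank ℝ W) - g : ℝ) : EReal) ≤ maxDiv E := by
  obtain ⟨P, hP0, hPW, hcard⟩ := exists_nonneg_moments_eq_card_support_le W hU.1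
  have hP : IsProb P := ⟨hP0, by simpa [hU.2] using hPW _ h1W⟩
  have hsupp : (0 : ℝ) < #{x | P x ≠ 0} := by
    obtain ⟨x, -, hx⟩ := exists_ne_zero_of_sum_ne_zero (hP.2 ▸ one_ne_zero)
    exact_mod_cast card_pos.2 ⟨x, by simpa using hx⟩
  refine le_iSup₂_of_le P hP (le_iInf₂ fun Q hQ => ?_)
  obtain ⟨hQpos, hlogQ⟩ := hE Q hQ
  rw [KL_of_pos hQpos, EReal.coe_le_coe_iff]
  calc -log (finrank ℝ W) - g
      ≤ -log #{x | P x ≠ 0} - ∑ x, U x * log (Q x) := by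
        gcongr
        exact hg Q hQ
    _ ≤ ∑ x, P x * log (P x) - ∑ x, P x * log (Q x) := by
        rw [hPW _ hlogQ]; linarith [neg_log_card_support_le_sum_mul_log hP]
    _ = ∑ x, P x * log (P x / Q x) := by
        rw [← sum_sub_distrib]
        refine sum_congr rfl fun x _ => ?_
        rcases eq_or_ne (P x) 0 with h | h
        · simp [h]
        · rw [log_div h (hQpos x).ne']; ring

theorem mem_expFam_of_mem_closure {ν : X → ℝ} (hν : ∀ x, 0 < ν x)
    {T : Submodule ℝ (X → ℝ)} {P : X → ℝ} (hP : P ∈ closure (expFam ν T))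
    (hpos : ∀ x, 0 < P x) : P ∈ expFam ν T := by
  refine ⟨hpos, ?_, ?_⟩
  · exact closure_minimal (fun Q hQ => hQ.2.1)
      (isClosed_eq (continuous_finsetSum _ fun x _ => continuous_apply x) continuous_const) hP
  · have hcont : ContinuousAt (fun Q : X → ℝ => fun x => log (Q x / ν x)) P :=
      continuousAt_pi.2 fun x =>
        ((continuous_apply x).continuousAt.div_const _).log (div_pos (hpos x) (hν x)).ne'
    exact closure_minimal (by rintro _ ⟨Q, hQ, rfl⟩; exact hQ.2.2) T.closed_of_finiteDimensional
      (hcont.continuousWithinAt.mem_closure_image hP)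

theorem exists_sum_mul_log_le_lt_of_not_mem_closure {E : Set (X → ℝ)}
    (hE : ∀ Q ∈ E, (∀ x, 0 < Q x) ∧ ∑ x, Q x = 1)
    (hU : (fun _ => (Fintype.card X : ℝ)⁻¹) ∉ closure E) :
    ∃ g < -log (Fintype.card X),
      ∀ Q ∈ E, ∑ x, (Fintype.card X : ℝ)⁻¹ * log (Q x) ≤ g := by
  rcases E.eq_empty_or_nonempty with rfl | ⟨Q₀, hQ₀⟩
  · exact ⟨-log (Fintype.card X) - 1, by linarith, by simp⟩
  have hsimplex : closure E ⊆ stdSimplex ℝ X :=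
    closure_minimal (fun Q hQ => ⟨fun x => ((hE Q hQ).1 x).le, (hE Q hQ).2⟩)
      (isClosed_stdSimplex ℝ X)
  obtain ⟨P, hPE, hPmax⟩ :=
    ((isCompact_stdSimplex ℝ X).of_isClosed_subset isClosed_closure hsimplex).exists_isMaxOn
      ⟨Q₀, subset_closure hQ₀⟩
      (continuous_finsetProd univ fun x _ => continuous_apply x).continuousOn
  have hprod : ∀ Q ∈ E, ∏ x, Q x ≤ ∏ x, P x := fun Q hQ => hPmax (subset_closure hQ)
  have hPpos : ∀ x, 0 < P x := by
    intro x
    refine ((hsimplex hPE).1 x).lt_of_ne' fun h => ?_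
    have := hprod Q₀ hQ₀
    rw [prod_eq_zero (mem_univ x) h] at this
    exact this.not_gt (prod_pos fun y _ => (hE Q₀ hQ₀).1 y)
  refine ⟨∑ x, (Fintype.card X : ℝ)⁻¹ * log (P x),
    sum_mul_log_lt_neg_log_card hPpos (hsimplex hPE).2 fun h => hU (h ▸ hPE), fun Q hQ => ?_⟩
  simp only [← mul_sum, ← log_prod fun x _ => (hPpos x).ne',
    ← log_prod fun x _ => ((hE Q hQ).1 x).ne']
  exact mul_le_mul_of_nonneg_left (log_le_log (prod_pos fun x _ => (hE Q hQ).1 x) (hprod Q hQ))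
    (by positivity)

theorem finrank_pos_of_one_mem [Nonempty X] {T : Submodule ℝ (X → ℝ)}
    (h1T : (fun _ => (1 : ℝ)) ∈ T) : 0 < finrank ℝ T := by
  have h1 : (fun _ => (1 : ℝ)) ≠ (0 : X → ℝ) := fun h =>
    one_ne_zero (congrFun h (Classical.arbitrary X))
  exact Submodule.one_le_finrank_iff.2 fun h => h1 ((Submodule.mem_bot ℝ).1 (h ▸ h1T))

theorem log_mem_of_mem_expFam {ν : X → ℝ} (hν : ∀ x, 0 < ν x)
    {T W : Submodule ℝ (X → ℝ)} (hTW : T ≤ W) (hνW : (fun x => log (ν x)) ∈ W) {Q : X → ℝ} (hQ : Q ∈ expFam ν T) :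
    (fun x => log (Q x)) ∈ W := by
  convert W.add_mem (hTW hQ.2.2) hνW using 1
  ext x
  simp [log_div (hQ.1 x).ne' (hν x).ne']

theorem log_card_div_finrank_add_one_lt_maxDiv [Nonempty X] {ν : X → ℝ}
    (hν : ∀ x, 0 < ν x) {T : Submodule ℝ (X → ℝ)} (h1T : (fun _ => (1 : ℝ)) ∈ T) :
    ((log ((Fintype.card X : ℝ) / (finrank ℝ T + 1)) : ℝ) : EReal) <
      maxDiv (expFam ν T) := by
  set N := (Fintype.card X : ℝ)
  set U : X → ℝ := fun _ => N⁻¹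
  have hN : 0 < N := by positivity
  have hU : IsProb U := ⟨fun _ => by positivity, by simp [U, N]⟩
  have hE (W : Submodule ℝ (X → ℝ)) (hTW : T ≤ W) (hνW : (fun x => log (ν x)) ∈ W) :
      ∀ Q ∈ expFam ν T, (∀ x, 0 < Q x) ∧ (fun x => log (Q x)) ∈ W := fun Q hQ =>
    ⟨hQ.1, log_mem_of_mem_expFam hν hTW hνW hQ⟩
  have hsplit : log (N / (finrank ℝ T + 1)) = log N - log (finrank ℝ T + 1) :=
    log_div hN.ne' (by positivity)
  by_cases hνT : (fun x => log (ν x)) ∈ T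
  · refine lt_of_lt_of_le ?_ (le_maxDiv_of_log_mem h1T (hE T le_rfl hνT) hU
      fun Q hQ => sum_mul_log_le_neg_log_card hQ.1 hQ.2.1)
    have hk : (0 : ℝ) < finrank ℝ T := by exact_mod_cast finrank_pos_of_one_mem h1T
    rw [EReal.coe_lt_coe_iff, hsplit]
    linarith [log_lt_log hk (lt_add_one _)]
  · have hUE : U ∉ closure (expFam ν T) := fun hcl => hνT <| by
      have hUE := mem_expFam_of_mem_closure hν hcl fun _ => inv_pos.2 hN
      convert T.sub_mem (T.smul_mem (log N⁻¹) h1T) hUE.2.2 using 1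
      ext x; simp [U, log_div (inv_pos.2 hN).ne' (hν x).ne']
    obtain ⟨g, hg, hgE⟩ :=
      exists_sum_mul_log_le_lt_of_not_mem_closure (fun Q hQ => ⟨hQ.1, hQ.2.1⟩) hUE
    set W := T ⊔ ℝ ∙ fun x => log (ν x)
    have hW : finrank ℝ W = finrank ℝ T + 1 := Submodule.finrank_sup_span_singleton hνT
    refine lt_of_lt_of_le ?_ (le_maxDiv_of_log_mem (le_sup_left (a := T) h1T)
      (hE W le_sup_left (Submodule.mem_sup_right (Submodule.mem_span_singleton_self _))) hU hgE)
    rw [EReal.coe_lt_coe_iff, hsplit, hW]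
    push_cast
    linarith

end FiniteSpace

section Partition

variable {X Y : Type*} (q : X → Y)

theorem mem_range_funLeft_iff {f : X → ℝ} :
    f ∈ LinearMap.range (LinearMap.funLeft ℝ ℝ q) ↔ f.FactorsThrough q := by
  refine ⟨?_, fun h => ⟨Function.extend q f 0, funext (h.extend_apply 0)⟩⟩
  rintro ⟨g, rfl⟩ a b hab
  simp [LinearMap.funLeft_apply, hab]

theorem finrank_range_funLeft [Fintype Y] (hq : Function.Surjective q) :
    finrank ℝ (LinearMap.range (LinearMap.funLeft ℝ ℝ q)) = Fintype.card Y := by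
  rw [LinearMap.finrank_range_of_inj (LinearMap.funLeft_injective_of_surjective _ _ _ hq),
    Module.finrank_fintype_fun_eq_card]

variable [Fintype X]

theorem partExpFam_eq_expFam : partExpFam (fun x y => q x = q y) =
    expFam (fun _ => 1) (LinearMap.range (LinearMap.funLeft ℝ ℝ q)) := by
  ext P
  simp only [partExpFam, expFam, Set.mem_ofPred_eq, div_one, mem_range_funLeft_iff]
  refine and_congr_right fun hP => and_congr_right fun _ => ?_
  exact ⟨fun h a b hab => by simp [h a b hab],
    fun h a b hab => log_injOn_pos (hP a) (hP b) (h hab)⟩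

variable {q} [DecidableEq Y] {M : ℕ}

theorem sum_sum_fiber (hM : ∀ x, #{y | q y = q x} = M) (f : X → ℝ) :
    ∑ x, ∑ y with q y = q x, f y = M * ∑ y, f y := by
  rw [sum_comm' (t' := univ) (s' := fun y => {x | q x = q y}) (by simp [eq_comm]), mul_sum]
  simp [hM]

theorem maxDiv_partExpFam_le (hM : ∀ x, #{y | q y = q x} = M) :
    maxDiv (partExpFam fun x y => q x = q y) ≤ log M := by
  refine iSup₂_le fun P hP => EReal.le_of_forall_lt_iff_le.1 fun r hr => ?_
  obtain ⟨x₀, -, -⟩ := exists_ne_zero_of_sum_ne_zero (hP.2 ▸ one_ne_zero)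
  have hMpos : (0 : ℝ) < M := by
    rw [← hM x₀]; exact_mod_cast card_pos.2 ⟨x₀, by simp⟩
  set c := M * exp (-r)
  have hc0 : 0 < c := by positivity
  have hc1 : c < 1 := by
    have := (log_lt_iff_lt_exp hMpos).1 (EReal.coe_lt_coe_iff.1 hr)
    calc c < exp r * exp (-r) := mul_lt_mul_of_pos_right this (exp_pos _)
      _ = 1 := by rw [← exp_add, add_neg_cancel, exp_zero]
  set Q : X → ℝ := fun x => c / M * ∑ y with q y = q x, P y + (1 - c) / Fintype.card X
  have hN : (0 : ℝ) < Fintype.card X := by exact_mod_cast Fintype.card_pos_iff.2 ⟨x₀⟩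
  have hc1' : 0 < 1 - c := by linarith
  have hQpos : ∀ x, 0 < Q x := fun x => by
    have : 0 ≤ ∑ y with q y = q x, P y := sum_nonneg fun y _ => hP.1 y
    positivity
  have hQ : Q ∈ partExpFam fun x y => q x = q y := by
    refine ⟨hQpos, ?_, fun x y hxy => by simp only [Q, hxy]⟩
    rw [sum_add_distrib, ← mul_sum, sum_sum_fiber hM, hP.2, sum_const, card_univ, nsmul_eq_mul]
    field_simp
    ring
  refine (iInf₂_le Q hQ).trans (KL_le_of_le_exp_mul hP hQpos fun x => ?_)
  calc P x ≤ ∑ y with q y = q x, P y := single_le_sum (fun y _ => hP.1 y) (by simp)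
    _ = exp r * (c / M * ∑ y with q y = q x, P y) := by
        simp only [c]
        rw [mul_div_cancel_left₀ _ hMpos.ne', ← mul_assoc, ← exp_add, add_neg_cancel,
          exp_zero, one_mul]
    _ ≤ exp r * Q x := by
        gcongr
        exact le_add_of_nonneg_right (by positivity)

theorem log_le_maxDiv_partExpFam [Nonempty X] (hM : ∀ x, #{y | q y = q x} = M) :
    (log M : EReal) ≤ maxDiv (partExpFam fun x y => q x = q y) := by
  obtain x₀ := Classical.arbitrary X
  have hMpos : (0 : ℝ) < M := by
    rw [← hM x₀]; exact_mod_cast card_pos.2 ⟨x₀, by simp⟩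
  refine le_iSup₂_of_le (fun x => if x = x₀ then 1 else 0) ⟨fun x => by positivity, by simp⟩
    (le_iInf₂ fun Q hQ => ?_)
  rw [KL_of_pos hQ.1, EReal.coe_le_coe_iff]
  have hfiber : M * Q x₀ ≤ 1 := calc
    M * Q x₀ = ∑ y with q y = q x₀, Q y := by
      rw [sum_congr rfl fun y hy => hQ.2.2 y x₀ (mem_filter.1 hy).2, sum_const, hM, nsmul_eq_mul]
    _ ≤ ∑ y, Q y := sum_le_sum_of_subset_of_nonneg (subset_univ _) fun y _ _ => (hQ.1 y).le
    _ = 1 := hQ.2.1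
  simp only [ite_mul, one_mul, zero_mul, sum_ite_eq', mem_univ, if_true, one_div, log_inv]
  have := log_le_log (mul_pos hMpos (hQ.1 x₀)) hfiber
  rw [log_mul hMpos.ne' (hQ.1 x₀).ne', log_one] at this
  linarith

theorem maxDiv_partExpFam [Nonempty X] (hM : ∀ x, #{y | q y = q x} = M) :
    maxDiv (partExpFam fun x y => q x = q y) = log M :=
  le_antisymm (maxDiv_partExpFam_le hM) (log_le_maxDiv_partExpFam hM)

end Partition

section Product

variable {ι : Type*} {α : ι → Type*}

theorem Finset.restrict_surjective [∀ i, Nonempty (α i)] (K : Finset ι) :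
    Function.Surjective (K.restrict : (∀ i, α i) → ∀ i : K, α i) := fun z =>
  ⟨Function.updateFinset (fun _ => Classical.arbitrary _) K z,
    Function.restrict_updateFinset _ _⟩

theorem card_filter_restrict_eq [Fintype ι] [DecidableEq ι] [∀ i, Fintype (α i)]
    (K : Finset ι) (x : ∀ i, α i) :
    #{y | K.restrict y = K.restrict x} = ∏ i ∈ Kᶜ, Fintype.card (α i) := by
  have : ({y | K.restrict y = K.restrict x} : Finset (∀ i, α i)) =
      Fintype.piFinset fun i => if i ∈ K then {x i} else univ := by
    ext y
    simp only [mem_filter, mem_univ, true_and, Fintype.mem_piFinset, funext_iff, Subtype.forall,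
      Finset.restrict]
    refine ⟨fun h i => ?_, fun h i hi => by simpa [hi] using h i⟩
    split_ifs with hi
    · simp [h i hi]
    · simp
  rw [this, Fintype.card_piFinset, ← Fintype.prod_ite_mem Kᶜ]
  refine prod_congr rfl fun i _ => ?_
  by_cases hi : i ∈ K <;> simp [hi]

end Product

/-- on a product `X = X₁ × ⋯ × X_n`, the family `E_K` of strictly
positive distributions depending only on the coordinates in `K` is an exponential
family of dimension `∏_{i∈K} N_i − 1`, its maximal divergence is `∑_{i∉K} log N_i`,
and every exponential family of strictly smaller dimension has strictly larger
maximal divergence. -/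
theorem stmt18 (n : ℕ) (Xf : Fin n → Type*) [∀ i, Fintype (Xf i)] [∀ i, Nonempty (Xf i)]
    (K : Finset (Fin n)) (EK : Set ((∀ i, Xf i) → ℝ))
    (hEK : EK = {P : (∀ i, Xf i) → ℝ | (∀ x, 0 < P x) ∧ ∑ x, P x = 1 ∧
      ∀ x y : ∀ i, Xf i, (∀ i ∈ K, x i = y i) → P x = P y}) :
    (∃ (ν : (∀ i, Xf i) → ℝ) (T : Submodule ℝ ((∀ i, Xf i) → ℝ)),
        (∀ x, 0 < ν x) ∧ (fun _ => (1 : ℝ)) ∈ T ∧ EK = expFam ν T ∧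
        Module.finrank ℝ T - 1 = (∏ i ∈ K, Fintype.card (Xf i)) - 1) ∧
    maxDiv EK = ((∑ i ∈ Kᶜ, Real.log (Fintype.card (Xf i) : ℝ) : ℝ) : EReal) ∧
    (∀ (ν : (∀ i, Xf i) → ℝ) (T : Submodule ℝ ((∀ i, Xf i) → ℝ)),
      (∀ x, 0 < ν x) → (fun _ => (1 : ℝ)) ∈ T →
      Module.finrank ℝ T - 1 < (∏ i ∈ K, Fintype.card (Xf i)) - 1 →
      ((∑ i ∈ Kᶜ, Real.log (Fintype.card (Xf i) : ℝ) : ℝ) : EReal) < maxDiv (expFam ν T)) := by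
  set q : (∀ i, Xf i) → ∀ i : K, Xf i := K.restrict
  set d := ∏ i ∈ K, Fintype.card (Xf i)
  set M := ∏ i ∈ Kᶜ, Fintype.card (Xf i)
  have hEK' : EK = partExpFam fun x y => q x = q y := by
    simp only [hEK, q, funext_iff, Subtype.forall, Finset.restrict]
    rfl
  have hlogM : ∑ i ∈ Kᶜ, log (Fintype.card (Xf i) : ℝ) = log M := by
    simp only [M, Nat.cast_prod]
    exact (log_prod fun i _ => Nat.cast_ne_zero.2 (Fintype.card_ne_zero (α := Xf i))).symm
  refine ⟨⟨fun _ => 1, _, fun _ => one_pos, (mem_range_funLeft_iff q).2 fun _ _ _ => rfl,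
    hEK'.trans (partExpFam_eq_expFam q), ?_⟩, ?_, fun ν T hν h1T hk => ?_⟩
  · rw [finrank_range_funLeft q (Finset.restrict_surjective K), Fintype.card_pi,
      prod_coe_sort K fun i => Fintype.card (Xf i)]
  · rw [hEK', maxDiv_partExpFam (card_filter_restrict_eq K), hlogM]
  · refine lt_of_le_of_lt ?_ (log_card_div_finrank_add_one_lt_maxDiv hν h1T)
    have hcard : Fintype.card (∀ i, Xf i) = d * M := by
      rw [Fintype.card_pi, prod_mul_prod_compl]
    have hMpos : (0 : ℝ) < M := Nat.cast_pos.2 (prod_pos fun i _ => Fintype.card_pos)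
    have hkd : (finrank ℝ T : ℝ) + 1 ≤ d := by
      exact_mod_cast (by omega : finrank ℝ T + 1 ≤ d)
    rw [hlogM, EReal.coe_le_coe_iff, hcard, Nat.cast_mul]
    refine log_le_log hMpos ((le_div_iff₀ (by positivity)).2 ?_)
    nlinarith
end
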